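/- Let G be a simple graph on a finite vertex set V and let k, u : V → ℕ satisfy k(v) ≤ u(N[v]) for all v ∈ V. Define ũ : V → ℕ by ũ(v) = min{u(v), max{k(w) : w ∈ N[v]}}. Then γ_{k,u}(G) = γ_{k,ũ}(G); in particular there exists a (k,u)-dominating function f of G with f(V) = γ_{k,u}(G) and f(v) ≤ max{k(w) : w ∈ N[v]} for all v ∈ V. -/

import Mathlib

/-
A minimum-weight `(k,u)`-dominating function `f` never puts more weight on a vertex `v` than
`max {k(w) : w ∈ N[v]}`: otherwise lowering `f(v)` by one keeps `f(N[w]) ≥ f(v) - 1 ≥ k(w)`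
for every `w ∈ N[v]` and leaves the other closed neighbourhoods untouched, giving a lighter
dominating function. Such an `f` is therefore `(k,ũ)`-dominating, and since `ũ ≤ u` every
`(k,ũ)`-dominating function is `(k,u)`-dominating, so the two minima agree.
-/

open Classical Finset

/-- The closed neighborhood `N[v]` of `v` in `G`, as a finset. -/
noncomputable def closedNbhd {V : Type*} [Fintype V] (G : SimpleGraph V) (v : V) : Finset V :=
  Finset.univ.filter (fun w => G.Adj v w ∨ w = v)

lemma mem_closedNbhd_self {V : Type*} [Fintype V] (G : SimpleGraph V) (v : V) :
    v ∈ closedNbhd G v := by simp [closedNbhd]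

/-- `f` is a `(k,u)`-dominating function of `G`. -/
def IsDomFn {V : Type*} [Fintype V] (G : SimpleGraph V) (k u f : V → ℕ) : Prop :=
  ∀ v, f v ≤ u v ∧ k v ≤ ∑ w ∈ closedNbhd G v, f w

/-- `f` is a `(k,u)`-packing function of `G`. -/
def IsPackFn {V : Type*} [Fintype V] (G : SimpleGraph V) (k u f : V → ℕ) : Prop :=
  ∀ v, f v ≤ u v ∧ ∑ w ∈ closedNbhd G v, f w ≤ k v

/-- `γ_{k,u}(G)`: minimum weight of a `(k,u)`-dominating function. -/
noncomputable def gammaKU {V : Type*} [Fintype V] (G : SimpleGraph V) (k u : V → ℕ) : ℕ :=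
  sInf {s | ∃ f, IsDomFn G k u f ∧ s = ∑ v, f v}

/-- `L_{k,u}(G)`: maximum weight of a `(k,u)`-packing function. -/
noncomputable def LKU {V : Type*} [Fintype V] (G : SimpleGraph V) (k u : V → ℕ) : ℕ :=
  sSup {s | ∃ f, IsPackFn G k u f ∧ s = ∑ v, f v}

lemma Finset.sum_update_sub_one_add_one {α : Type*} [DecidableEq α] {s : Finset α}
    {f : α → ℕ} {a : α} (ha : a ∈ s) (hfa : f a ≠ 0) :
    ∑ x ∈ s, Function.update f a (f a - 1) x + 1 = ∑ x ∈ s, f x := by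
  rw [sum_update_of_mem ha, ← add_sum_erase s f ha, sdiff_singleton_eq_erase]
  omega

section

variable {V : Type*} [Fintype V] (G : SimpleGraph V)

lemma mem_closedNbhd_comm {v w : V} : w ∈ closedNbhd G v ↔ v ∈ closedNbhd G w := by
  simp only [closedNbhd, mem_filter, mem_univ, true_and, G.adj_comm v w, eq_comm]

variable {G} {k u f : V → ℕ}

lemma IsDomFn.mono (hf : IsDomFn G k u f) {u' : V → ℕ} (hu : u ≤ u') : IsDomFn G k u' f :=
  fun v => ⟨(hf v).1.trans (hu v), (hf v).2⟩

lemma gammaKU_le_sum (hf : IsDomFn G k u f) : gammaKU G k u ≤ ∑ v, f v :=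
  Nat.sInf_le ⟨f, hf, rfl⟩

lemma exists_isDomFn_sum_eq_gammaKU (hf : IsDomFn G k u f) :
    ∃ g, IsDomFn G k u g ∧ ∑ v, g v = gammaKU G k u := by
  obtain ⟨g, hg, hgs⟩ := Nat.sInf_mem
    (⟨_, f, hf, rfl⟩ : {s | ∃ f, IsDomFn G k u f ∧ s = ∑ v, f v}.Nonempty)
  exact ⟨g, hg, hgs.symm⟩

lemma gammaKU_le_gammaKU_of_le {u' : V → ℕ} (hu : u ≤ u') (hf : IsDomFn G k u f) :
    gammaKU G k u' ≤ gammaKU G k u := by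
  obtain ⟨g, hg, hgs⟩ := exists_isDomFn_sum_eq_gammaKU hf
  exact hgs ▸ gammaKU_le_sum (hg.mono hu)

lemma IsDomFn.update_sub_one (hf : IsDomFn G k u f) {v : V}
    (hv : (closedNbhd G v).sup k < f v) :
    IsDomFn G k u (Function.update f v (f v - 1)) := by
  intro w
  constructor
  · rcases eq_or_ne w v with rfl | hwv
    · simpa using (Nat.sub_le _ _).trans (hf w).1
    · simpa [Function.update_of_ne hwv] using (hf w).1
  · by_cases hvw : v ∈ closedNbhd G w
    · have hsum := sum_update_sub_one_add_one hvw (f := f) (by omega)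
      have hfv : f v ≤ ∑ x ∈ closedNbhd G w, f x :=
        single_le_sum (fun _ _ => Nat.zero_le _) hvw
      have hkw : k w ≤ (closedNbhd G v).sup k := le_sup ((mem_closedNbhd_comm G).mpr hvw)
      omega
    · rw [sum_update_of_notMem hvw]
      exact (hf w).2

lemma IsDomFn.le_sup_of_sum_eq_gammaKU (hf : IsDomFn G k u f)
    (hmin : ∑ v, f v = gammaKU G k u) (v : V) : f v ≤ (closedNbhd G v).sup k := by
  by_contra! hv
  have hle := gammaKU_le_sum (hf.update_sub_one hv)
  have hsum := sum_update_sub_one_add_one (mem_univ v) (f := f) (by omega)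
  omega

end

/-- if `k(v) ≤ u(N[v])` for all `v` and `ũ(v) = min(u(v), max{k(w) : w ∈ N[v]})`,
then `γ_{k,u}(G) = γ_{k,ũ}(G)`; in particular some minimum-weight `(k,u)`-dominating
function `f` satisfies `f(v) ≤ max{k(w) : w ∈ N[v]}` for all `v`. -/
theorem stmt_7 {V : Type*} [Fintype V] (G : SimpleGraph V) (k u : V → ℕ)
    (hk : ∀ v, k v ≤ ∑ w ∈ closedNbhd G v, u w) :
    gammaKU G k u = gammaKU G k (fun v => min (u v) ((closedNbhd G v).sup k)) ∧
      ∃ f, IsDomFn G k u f ∧ (∑ v, f v) = gammaKU G k u ∧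
        ∀ v, f v ≤ (closedNbhd G v).sup k := by
  obtain ⟨f, hf, hmin⟩ := exists_isDomFn_sum_eq_gammaKU (u := u) fun v => ⟨le_rfl, hk v⟩
  have hbound := hf.le_sup_of_sum_eq_gammaKU hmin
  have hf' : IsDomFn G k (fun v => min (u v) ((closedNbhd G v).sup k)) f :=
    fun v => ⟨le_min (hf v).1 (hbound v), (hf v).2⟩
  refine ⟨le_antisymm ?_ (hmin ▸ gammaKU_le_sum hf'), f, hf, hmin, hbound⟩
  exact gammaKU_le_gammaKU_of_le (fun v => min_le_left _ _) hf'
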